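/- Suppose 2 ∈ D_h^{(p^m)} with f ∤ h (equivalently 2^e ≢ 1 mod p). Then A_v ∉ F_2 for every v. -/

import Mathlib

/-!
Squaring is the Frobenius in characteristic 2 and `2 ≡ g ^ (h + p^(m-1) f t) (mod p^m)`, so
squaring sends `A_v` to `A_{v+h}`. The level-`s` part of `A_v` sums `β ^ (p^(m-s) g^x)` over
`x = v + i + L t` with `i < L/2`, `t < e`, where `L = p^(s-1) f` and `L e = φ(p^s)` is the order
of `g` modulo `p^s`. So `A` is periodic modulo `p^(m-1) f`, and the shift by `δ = p^(m-1) f / 2`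
supplies the complementary range `L/2 ≤ i < L`: `A_v + A_{v+δ}` is a sum of the Ramanujan sums
`∑_{y ∈ (ℤ/p^s)ˣ} ζ^y = μ(p^s)`, that is `-1`.
If `A_v² = A_v`, then `A` is constant on `v + ℕ h`. Since `f = 2^r ∤ h`, some multiple of `h` is
`δ` modulo `p^(m-1) f`, so `A_v + A_v = -1`, which is impossible in characteristic 2.
-/

open Finset Function
open scoped Nat

theorem Function.Periodic.sum_range_add {M : Type*} [AddCommMonoid M] {a : ℕ → M} {n : ℕ}
    (ha : Periodic a n) (c : ℕ) : ∑ t ∈ range n, a (t + c) = ∑ t ∈ range n, a t := by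
  induction c with
  | zero => rfl
  | succ c ih =>
    rw [← ih]
    rcases n with _ | n
    · simp
    · have hwrap : a (n + (c + 1)) = a (0 + c) := by
        rw [show n + (c + 1) = 0 + c + (n + 1) by omega, ha]
      rw [sum_range_succ, hwrap, sum_range_succ' (fun t => a (t + c))]
      simp only [add_assoc, add_comm 1 c]

theorem Finset.sum_range_mul_eq_sum_sum {M : Type*} [AddCommMonoid M] (a : ℕ → M) (L e : ℕ) :
    ∑ x ∈ range (L * e), a x = ∑ t ∈ range e, ∑ i ∈ range L, a (i + L * t) := by
  induction e with
  | zero => simp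
  | succ e ih =>
    rw [Nat.mul_succ, sum_range_add, ih, sum_range_succ]
    simp only [add_comm]

theorem Finset.sum_filter_dvd_range_mul {M : Type*} [AddCommMonoid M] (a : ℕ → M) {p : ℕ}
    (hp : 0 < p) (q : ℕ) :
    ∑ y ∈ range (p * q) with p ∣ y, a y = ∑ j ∈ range q, a (p * j) := by
  symm
  refine sum_nbij (p * ·) (fun j hj => ?_) (fun j _ k _ h => Nat.eq_of_mul_eq_mul_left hp h)
    (fun y hy => ?_) fun _ _ => rfl
  · simp only [mem_range, mem_filter] at hj ⊢
    exact ⟨Nat.mul_lt_mul_of_pos_left hj hp, dvd_mul_right p j⟩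
  · simp only [coe_filter, mem_range, Set.mem_ofPred_eq] at hy
    obtain ⟨⟨j, rfl⟩, hj⟩ := hy.symm
    exact ⟨j, by simpa using Nat.lt_of_mul_lt_mul_left hj, rfl⟩

theorem pow_sub_one_eq_pow_sub_one_mul_pow_sub {M : Type*} [Monoid M] (a : M) {m s : ℕ}
    (hs : 1 ≤ s) (hsm : s ≤ m) : a ^ (m - 1) = a ^ (s - 1) * a ^ (m - s) := by
  rw [← pow_add]
  congr 1
  omega

theorem exists_mul_eq_two_pow_div_two_add_mul {r h : ℕ} (hh : ¬ 2 ^ r ∣ h) :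
    ∃ n q, n * h = 2 ^ r / 2 + 2 ^ r * q := by
  obtain ⟨c, h', ⟨q, rfl⟩, rfl⟩ :=
    Nat.exists_eq_two_pow_mul_odd (n := h) (by rintro rfl; simp at hh)
  have hcr : c < r := by
    by_contra! hrc
    exact hh (Dvd.dvd.mul_right (pow_dvd_pow 2 hrc) _)
  refine ⟨2 ^ (r - 1 - c), q, ?_⟩
  obtain ⟨r, rfl⟩ : ∃ r', r = r' + 1 := ⟨r - 1, by omega⟩
  rw [pow_succ, Nat.mul_div_cancel _ two_pos, ← mul_assoc, ← pow_add,
    show r + 1 - 1 - c + c = r by omega]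
  ring

section PowPow

variable {G : Type*} [Monoid G] {γ : G}

theorem pow_eq_pow_of_natCast_eq {X Y : ℕ} (h : (X : ZMod (orderOf γ)) = Y) : γ ^ X = γ ^ Y :=
  pow_eq_pow_of_modEq ((ZMod.natCast_eq_natCast_iff _ _ _).mp h) (pow_orderOf_eq_one γ)

theorem periodic_pow_pow {g N : ℕ} (hg : (g : ZMod (orderOf γ)) ^ N = 1) :
    Periodic (fun x => γ ^ g ^ x) N := fun x =>
  pow_eq_pow_of_natCast_eq (by push_cast; rw [pow_add, hg, mul_one])

theorem orderOf_pow_pow_sub {p m : ℕ} (hp : 0 < p) (hγ : orderOf γ = p ^ m) {s : ℕ}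
    (hs : s ≤ m) : orderOf (γ ^ p ^ (m - s)) = p ^ s := by
  rw [orderOf_pow_of_dvd (pow_ne_zero _ hp.ne') (hγ ▸ pow_dvd_pow p (Nat.sub_le m s)), hγ,
    Nat.pow_div (Nat.sub_le m s) hp, Nat.sub_sub_self hs]

end PowPow

theorem ZMod.sum_range_totient_val_pow {M : Type*} [AddCommMonoid M] {n : ℕ} [NeZero n]
    {u : ZMod n} (hu : orderOf u = φ n) (a : ℕ → M) (w : ℕ) :
    ∑ x ∈ range (φ n), a (u ^ (w + x)).val = ∑ y ∈ range n with n.Coprime y, a y := by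
  have hfin : IsOfFinOrder u := orderOf_pos_iff.mp (hu ▸ Nat.totient_pos.mpr (NeZero.pos n))
  have hmaps : ∀ x ∈ range (φ n), (u ^ (w + x)).val ∈ {y ∈ range n | n.Coprime y} :=
    fun x _ => by
      simp only [mem_filter, mem_range]
      exact ⟨ZMod.val_lt _, (ZMod.val_coe_unit_coprime (hfin.isUnit.pow (w + x)).unit).symm⟩
  have hinj : ∀ x y, x ∈ range (φ n) → y ∈ range (φ n) →
      (u ^ (w + x)).val = (u ^ (w + y)).val → x = y := fun x y hx hy hxy => by
    have hmod := (hfin.pow_eq_pow_iff_modEq.mp (ZMod.val_injective n hxy)).add_left_cancel' w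
    exact hmod.eq_of_lt_of_lt (hu ▸ mem_range.mp hx) (hu ▸ mem_range.mp hy)
  refine sum_nbij _ hmaps (fun x hx y hy => hinj x y hx hy) (fun y hy => ?_) fun _ _ => rfl
  obtain ⟨x, hx, rfl⟩ := surj_on_of_inj_on_of_card_le (fun x _ => (u ^ (w + x)).val) hmaps hinj
    (by rw [card_range, Nat.totient_eq_card_coprime]) y hy
  exact ⟨x, hx, rfl⟩

theorem IsPrimitiveRoot.sum_filter_coprime_pow_prime_pow {K : Type*} [Field K] {p s : ℕ}
    {ζ : K} (hp : p.Prime) (hs : 1 ≤ s) (hζ : IsPrimitiveRoot ζ (p ^ s)) :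
    ∑ y ∈ range (p ^ s) with (p ^ s).Coprime y, ζ ^ y = if s = 1 then -1 else 0 := by
  have hps : p ^ s = p * p ^ (s - 1) := by rw [← pow_succ']; congr 1; omega
  have hcop : ∀ y, (p ^ s).Coprime y ↔ ¬ p ∣ y := fun y => by
    rw [Nat.coprime_pow_left_iff (by omega), hp.coprime_iff_not_dvd]
  have hmult : ∑ y ∈ range (p ^ s) with p ∣ y, ζ ^ y = ∑ j ∈ range (p ^ (s - 1)), (ζ ^ p) ^ j := by
    simp only [hps, sum_filter_dvd_range_mul _ hp.pos, pow_mul]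
  have htotal := sum_filter_add_sum_filter_not (range (p ^ s)) (p ∣ ·) (ζ ^ ·)
  rw [hmult, hζ.geom_sum_eq_zero (Nat.one_lt_pow (by omega) hp.one_lt)] at htotal
  simp only [← hcop] at htotal
  split_ifs with h1
  · subst h1
    simpa [eq_neg_iff_add_eq_zero, add_comm] using htotal
  · have hζp : IsPrimitiveRoot (ζ ^ p) (p ^ (s - 1)) := by
      simpa [hps, hp.ne_zero] using hζ.pow_of_dvd hp.ne_zero (hps ▸ dvd_mul_right p _)
    rwa [hζp.geom_sum_eq_zero (Nat.one_lt_pow (by omega) hp.one_lt), zero_add] at htotal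

theorem sum_range_totient_pow_pow {K : Type*} [Field K] {γ : K} {p s g : ℕ} (hp : p.Prime)
    (hs : 1 ≤ s) (hγ : orderOf γ = p ^ s) (hg : orderOf (g : ZMod (p ^ s)) = φ (p ^ s))
    (w : ℕ) : ∑ x ∈ range (φ (p ^ s)), γ ^ g ^ (w + x) = if s = 1 then -1 else 0 := by
  have : NeZero (p ^ s) := ⟨pow_ne_zero s hp.ne_zero⟩
  have hval : ∀ x, γ ^ g ^ (w + x) = γ ^ ((g : ZMod (p ^ s)) ^ (w + x)).val := fun x =>
    pow_eq_pow_of_natCast_eq (by rw [hγ]; simp)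
  simp only [hval]
  rw [ZMod.sum_range_totient_val_pow hg]
  exact (hγ ▸ IsPrimitiveRoot.orderOf γ).sum_filter_coprime_pow_prime_pow hp hs

section HalfBlockSum

variable {M : Type*} [AddCommMonoid M]

def halfBlockSum (a : ℕ → M) (L e v : ℕ) : M :=
  ∑ i ∈ range (L / 2), ∑ t ∈ range e, a (v + i + L * t)

theorem halfBlockSum_add_mul {a : ℕ → M} {L e : ℕ} (ha : Periodic a (L * e)) (v c : ℕ) :
    halfBlockSum a L e (v + L * c) = halfBlockSum a L e v := by
  refine sum_congr rfl fun i _ => ?_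
  have hper : Periodic (fun t => a (v + i + L * t)) e := fun t => by
    simpa only [mul_add, ← add_assoc] using ha (v + i + L * t)
  simpa only [mul_add, add_right_comm v (L * c), add_assoc, add_comm (L * c)]
    using hper.sum_range_add c

theorem halfBlockSum_add_halfBlockSum_add_half (a : ℕ → M) {L : ℕ} (hL : Even L) (e v : ℕ) :
    halfBlockSum a L e v + halfBlockSum a L e (v + L / 2) = ∑ x ∈ range (L * e), a (v + x) := by
  obtain ⟨K, rfl⟩ := hL
  rw [halfBlockSum, halfBlockSum, show (K + K) / 2 = K by omega, sum_range_mul_eq_sum_sum]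
  conv_rhs => rw [sum_comm, sum_range_add]
  simp only [add_assoc]

theorem map_halfBlockSum_of_map_eq {N F : Type*} [AddCommMonoid N] [FunLike F M N]
    [AddMonoidHomClass F M N] (f : F) {a : ℕ → M} {b : ℕ → N} {k : ℕ}
    (hf : ∀ x, f (a x) = b (x + k)) (L e v : ℕ) :
    f (halfBlockSum a L e v) = halfBlockSum b L e (v + k) := by
  simp only [halfBlockSum, map_sum, hf]
  refine sum_congr rfl fun i _ => sum_congr rfl fun t _ => ?_
  congr 1
  ring

end HalfBlockSum

theorem sq_halfBlockSum_pow_pow {R : Type*} [CommSemiring R] [CharP R 2] {γ : R}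
    {g L e k c : ℕ}
    (hper : Periodic (fun x => γ ^ g ^ x) (L * e))
    (h2 : (2 : ZMod (orderOf γ)) = g ^ (k + L * c)) (v : ℕ) :
    halfBlockSum (fun x => γ ^ g ^ x) L e v ^ 2
      = halfBlockSum (fun x => γ ^ g ^ x) L e (v + k) := by
  have hsq : ∀ x, frobenius R 2 (γ ^ g ^ x) = γ ^ g ^ (x + (k + L * c)) := fun x => by
    rw [frobenius_def, ← pow_mul]
    exact pow_eq_pow_of_natCast_eq (by push_cast; rw [h2, ← pow_add, add_comm])
  rw [← frobenius_def, map_halfBlockSum_of_map_eq _ (b := fun x => γ ^ g ^ x) hsq, ← add_assoc,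
    halfBlockSum_add_mul hper]

theorem halfBlockSum_pow_pow_add_halfBlockSum_add_half {K : Type*} [Field K] {γ : K}
    {p s g L e : ℕ} (hp : p.Prime) (hs : 1 ≤ s) (hγ : orderOf γ = p ^ s)
    (hg : orderOf (g : ZMod (p ^ s)) = φ (p ^ s)) (hLe : φ (p ^ s) = L * e) (hL : Even L)
    (v : ℕ) :
    halfBlockSum (fun x => γ ^ g ^ x) L e v + halfBlockSum (fun x => γ ^ g ^ x) L e (v + L / 2)
      = if s = 1 then -1 else 0 := by
  rw [halfBlockSum_add_halfBlockSum_add_half _ hL, ← hLe, sum_range_totient_pow_pow hp hs hγ hg]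

section HalfCosetSum

variable {F : Type*} [Field F] {β : F} {p m e f g : ℕ}

/-- The paper's `A_v`; the summand of index `s` is `H̄_v^{(p^s)}(β)`. -/
def halfCosetSum (β : F) (p m e f g v : ℕ) : F :=
  ∑ s ∈ Icc 1 m, halfBlockSum (fun x => β ^ (p ^ (m - s) * g ^ x)) (p ^ (s - 1) * f) e v

theorem periodic_halfCosetSum_summand (hp : p.Prime) (hβ : orderOf β = p ^ m)
    (hroot : ∀ j, 1 ≤ j → j ≤ m → orderOf (g : ZMod (p ^ j)) = φ (p ^ j))
    (hef : p - 1 = e * f) {s : ℕ} (hs : 1 ≤ s) (hsm : s ≤ m) :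
    Periodic (fun x => (β ^ p ^ (m - s)) ^ g ^ x) (p ^ (s - 1) * f * e) := by
  refine periodic_pow_pow ?_
  rw [orderOf_pow_pow_sub hp.pos hβ hsm, show p ^ (s - 1) * f * e = φ (p ^ s) by
    rw [Nat.totient_prime_pow hp hs, hef]; ring, ← hroot s hs hsm]
  exact pow_orderOf_eq_one _

theorem halfCosetSum_add_mul (hp : p.Prime) (hβ : orderOf β = p ^ m)
    (hroot : ∀ j, 1 ≤ j → j ≤ m → orderOf (g : ZMod (p ^ j)) = φ (p ^ j))
    (hef : p - 1 = e * f) (v c : ℕ) :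
    halfCosetSum β p m e f g (v + p ^ (m - 1) * f * c) = halfCosetSum β p m e f g v := by
  simp only [halfCosetSum, pow_mul]
  refine sum_congr rfl fun s hs => ?_
  obtain ⟨hs1, hsm⟩ := mem_Icc.mp hs
  rw [pow_sub_one_eq_pow_sub_one_mul_pow_sub p hs1 hsm,
    show p ^ (s - 1) * p ^ (m - s) * f * c = p ^ (s - 1) * f * (p ^ (m - s) * c) by ring]
  exact halfBlockSum_add_mul (periodic_halfCosetSum_summand hp hβ hroot hef hs1 hsm) v _

theorem sq_halfCosetSum [CharP F 2] {h t : ℕ} (hp : p.Prime) (hβ : orderOf β = p ^ m)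
    (hroot : ∀ j, 1 ≤ j → j ≤ m → orderOf (g : ZMod (p ^ j)) = φ (p ^ j))
    (hef : p - 1 = e * f)
    (h2 : (2 : ZMod (p ^ m)) = (g : ZMod (p ^ m)) ^ (h + p ^ (m - 1) * f * t)) (v : ℕ) :
    halfCosetSum β p m e f g v ^ 2 = halfCosetSum β p m e f g (v + h) := by
  simp only [halfCosetSum, pow_mul, sum_pow_char]
  refine sum_congr rfl fun s hs => ?_
  obtain ⟨hs1, hsm⟩ := mem_Icc.mp hs
  refine sq_halfBlockSum_pow_pow (c := p ^ (m - s) * t)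
    (periodic_halfCosetSum_summand hp hβ hroot hef hs1 hsm) ?_ v
  have h2s := congrArg (ZMod.castHom (pow_dvd_pow p hsm) (ZMod (p ^ s))) h2
  rw [map_ofNat, map_pow, map_natCast, pow_sub_one_eq_pow_sub_one_mul_pow_sub p hs1 hsm] at h2s
  rw [orderOf_pow_pow_sub hp.pos hβ hsm, h2s]
  ring_nf

theorem halfCosetSum_add_halfCosetSum_add_half (hp : p.Prime) (hop : Odd p) (hm : 1 ≤ m)
    (hβ : orderOf β = p ^ m)
    (hroot : ∀ j, 1 ≤ j → j ≤ m → orderOf (g : ZMod (p ^ j)) = φ (p ^ j))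
    (hef : p - 1 = e * f) (hf : Even f) (v : ℕ) :
    halfCosetSum β p m e f g v + halfCosetSum β p m e f g (v + p ^ (m - 1) * f / 2) = -1 := by
  simp only [halfCosetSum, pow_mul, ← sum_add_distrib]
  refine (sum_congr rfl (g := fun s => if s = 1 then (-1 : F) else 0) fun s hs => ?_).trans
    (by simp [hm])
  obtain ⟨hs1, hsm⟩ := mem_Icc.mp hs
  obtain ⟨k, hk⟩ : Odd (p ^ (m - s)) := hop.pow
  have hδ : p ^ (m - 1) * f / 2 = p ^ (s - 1) * f / 2 + p ^ (s - 1) * f * k := by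
    obtain ⟨K, rfl⟩ := hf
    have hhalf : ∀ n, n * (K + K) / 2 = n * K := fun n => by
      rw [← two_mul, mul_left_comm, Nat.mul_div_cancel_left _ two_pos]
    rw [pow_sub_one_eq_pow_sub_one_mul_pow_sub p hs1 hsm, hk, hhalf, hhalf]
    ring
  rw [hδ, ← add_assoc,
    halfBlockSum_add_mul (periodic_halfCosetSum_summand hp hβ hroot hef hs1 hsm)]
  refine halfBlockSum_pow_pow_add_halfBlockSum_add_half hp hs1
    (orderOf_pow_pow_sub hp.pos hβ hsm) (hroot s hs1 hsm) ?_ (hf.mul_left _) v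
  rw [Nat.totient_prime_pow hp hs1, hef]
  ring

end HalfCosetSum

theorem A_not_mem_F2_general (p m e f r g h : ℕ) (hp : p.Prime) (hop : Odd p)
    (hm : 1 ≤ m) (hf : f = 2 ^ r) (hef : p - 1 = e * f)
    (hroot : ∀ j, 1 ≤ j → j ≤ m → orderOf (g : ZMod (p ^ j)) = Nat.totient (p ^ j))
    (h2 : ∃ t < e, (2 : ZMod (p ^ m)) = (g : ZMod (p ^ m)) ^ (h + p ^ (m - 1) * f * t))
    (hh : ¬ f ∣ h)
    {F : Type*} [Field F] (hchar : CharP F 2) (β : F) (hβ : orderOf β = p ^ m) :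
    let A : ℕ → F := fun v => ∑ s ∈ Finset.Icc 1 m,
      ∑ i ∈ Finset.range (p ^ (s - 1) * f / 2), ∑ t ∈ Finset.range e,
        β ^ (p ^ (m - s) * g ^ (v + i + p ^ (s - 1) * f * t))
    ∀ v : ℕ, (A v) ^ 2 ≠ A v := by
  change ∀ v, halfCosetSum β p m e f g v ^ 2 ≠ halfCosetSum β p m e f g v
  intro v hv
  have := hchar
  obtain ⟨t, -, ht⟩ := h2
  have hinv : ∀ n, halfCosetSum β p m e f g (v + n * h) = halfCosetSum β p m e f g v := by
    intro n
    induction n with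
    | zero => simp
    | succ n ih => rw [add_one_mul, ← add_assoc, ← sq_halfCosetSum hp hβ hroot hef ht, ih, hv]
  subst hf
  have hfe : Even (2 ^ r) := (Nat.even_pow' (by rintro rfl; simp at hh)).mpr even_two
  obtain ⟨n, q, hnq⟩ := exists_mul_eq_two_pow_div_two_add_mul hh
  have hshift : v + p ^ (m - 1) * n * h
      = v + p ^ (m - 1) * 2 ^ r / 2 + p ^ (m - 1) * 2 ^ r * q := by
    rw [mul_assoc, hnq, Nat.mul_div_assoc _ (even_iff_two_dvd.mp hfe)]
    ring
  have hhalf := halfCosetSum_add_halfCosetSum_add_half hp hop hm hβ hroot hef hfe v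
  rw [← hinv (p ^ (m - 1) * n), hshift, halfCosetSum_add_mul hp hβ hroot hef,
    CharTwo.add_self_eq_zero] at hhalf
  exact one_ne_zero (neg_eq_zero.mp hhalf.symm)

/-- Proposition 2(1), second half: if `2 ∈ D_h^{(p^m)}` with `f ∤ h`
(equivalently `2^e ≢ 1 (mod p)`), then `A_v ∉ F₂` for every `v`,
i.e. `A_v² ≠ A_v`. -/
theorem A_not_mem_F2 (p m e f r g h : ℕ) (hp : p.Prime) (hop : Odd p)
    (hm : 1 ≤ m) (hr : 1 ≤ r) (hf : f = 2 ^ r) (he : 0 < e) (hef : p - 1 = e * f)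
    (hroot : ∀ j, 1 ≤ j → j ≤ m → orderOf (g : ZMod (p ^ j)) = Nat.totient (p ^ j))
    (h2 : ∃ t < e, (2 : ZMod (p ^ m)) = (g : ZMod (p ^ m)) ^ (h + p ^ (m - 1) * f * t))
    (hh : ¬ f ∣ h)
    {F : Type*} [Field F] (hchar : CharP F 2) (β : F) (hβ : orderOf β = p ^ m) :
    let A : ℕ → F := fun v => ∑ s ∈ Finset.Icc 1 m,
      ∑ i ∈ Finset.range (p ^ (s - 1) * f / 2), ∑ t ∈ Finset.range e,
        β ^ (p ^ (m - s) * g ^ (v + i + p ^ (s - 1) * f * t))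
    ∀ v : ℕ, (A v) ^ 2 ≠ A v :=
  A_not_mem_F2_general p m e f r g h hp hop hm hf hef hroot h2 hh hchar β hβ
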